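/- arXiv:0707.2333 — 2 statements merged into one kernel-verified Lean document; each statement's English description precedes it below -/
import Mathlib

section
/- Let p be a noncrossing pair partition of Z/(2r) (r ≥ 1) such that p joined with the pair partition {{1,2},{3,4},...,{2r-1,2r}} has a single block. Then p is uniquely determined: p = {{1,2r},{2,3},{4,5},...,{2r-2,2r-1}}. -/
/-- A partition (as a setoid) of `Fin N` is a pair partition if every block has two elements. -/
def IsPairPartition {N : ℕ} (p : Setoid (Fin N)) : Prop :=
  ∀ c ∈ p.classes, c.ncard = 2

/-- A partition of `Fin N` is noncrossing if there are no `p1 < q1 < p2 < q2` with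
`p1 ~ p2`, `q1 ~ q2` but `p1 ≁ q1`. -/
def IsNoncrossing {N : ℕ} (p : Setoid (Fin N)) : Prop :=
  ¬ ∃ p1 q1 p2 q2 : Fin N, p1 < q1 ∧ q1 < p2 ∧ p2 < q2 ∧
      p.r p1 p2 ∧ p.r q1 q2 ∧ ¬ p.r p1 q1

/-- The pair partition `{{1,2},{3,4},…,{2k-1,2k}}` (0-indexed: `{0,1},{2,3},…`). -/
def mSetoid (k : ℕ) : Setoid (Fin (2 * k)) :=
  Setoid.ker (fun i => i.val / 2)

/-- The cyclic pair partition `{{2,3},{4,5},…,{2k,1}}` (0-indexed: `{1,2},{3,4},…,{2k-1,0}`). -/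
def nSetoid (k : ℕ) : Setoid (Fin (2 * k)) :=
  Setoid.ker (fun i => ((i.val + 1) / 2) % k)

/-!
Write `f` for the partner map of `p`. Noncrossing makes every arc strictly between `u` and `f u`
a union of blocks of `p`, so it has even length and `f` changes parity. For odd `a` (0-indexed),
the open arc `(a, f a)` if `a < f a`, or the closed arc `[f a, a]` if `f a < a`, then runs from an
even point to an odd one, so it is a union of blocks of `m` as well. A set closed under `p` and
`m` is empty or everything, so `f a = a + 1` in the first case and `(f a, a) = (0, 2r - 1)` in the
second: `p` is the cyclically shifted pairing.
-/

open Finset in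
theorem Finset.even_card_of_involution {α : Type*} [LinearOrder α] {s : Finset α} {f : α → α}
    (hmaps : ∀ x ∈ s, f x ∈ s) (hinv : ∀ x ∈ s, f (f x) = x) (hne : ∀ x ∈ s, f x ≠ x) :
    Even #s := by
  have hswap : #(s.filter fun x => x < f x) = #(s.filter fun x => ¬ x < f x) := by
    refine card_nbij' f f ?_ ?_ ?_ ?_
    · intro x hx
      simp only [coe_filter, Set.mem_ofPred_eq] at hx ⊢
      exact ⟨hmaps x hx.1, by rw [hinv x hx.1]; exact hx.2.le.not_gt⟩
    · intro x hx
      simp only [coe_filter, Set.mem_ofPred_eq] at hx ⊢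
      refine ⟨hmaps x hx.1, ?_⟩
      rw [hinv x hx.1]
      exact lt_of_le_of_ne (not_lt.mp hx.2) (hne x hx.1)
    all_goals exact fun x hx => hinv x (mem_filter.mp hx).1
  rw [← card_filter_add_card_filter_not (fun x => x < f x), ← hswap]
  exact ⟨_, rfl⟩

theorem Setoid.rel_of_ncard_classes_eq_one {α : Type*} {s : Setoid α}
    (h : s.classes.ncard = 1) (x y : α) : s x y := by
  obtain ⟨c, hc⟩ := Set.ncard_eq_one.mp h
  have hx : {z | s z x} = c := by simpa [hc] using s.mem_classes x
  have hy : {z | s z y} = c := by simpa [hc] using s.mem_classes y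
  exact (hy ▸ hx ▸ s.refl x : x ∈ {z | s z y})

theorem Setoid.mem_of_sup_rel {α : Type*} {p q : Setoid α} {S : Set α}
    (hp : ∀ x y, p x y → x ∈ S → y ∈ S) (hq : ∀ x y, q x y → x ∈ S → y ∈ S)
    {x y : α} (hxy : (p ⊔ q) x y) (hx : x ∈ S) : y ∈ S := by
  have hker : p ⊔ q ≤ Setoid.ker (· ∈ S) := by
    refine sup_le (fun a b hab => ?_) (fun a b hab => ?_) <;> rw [Setoid.ker_def, eq_iff_iff]
    · exact ⟨hp a b hab, hp b a (p.symm hab)⟩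
    · exact ⟨hq a b hab, hq b a (q.symm hab)⟩
  exact (Setoid.ker_def.mp (hker hxy)) ▸ hx

theorem IsNoncrossing.rel_mem_Ioo {N : ℕ} {p : Setoid (Fin N)} (hnc : IsNoncrossing p)
    {u v x y : Fin N} (huv : p u v) (hx : x ∈ Set.Ioo u v) (hux : ¬ p u x) (hxy : p x y) :
    y ∈ Set.Ioo u v := by
  obtain ⟨hux', hxv⟩ := hx
  rcases lt_trichotomy y u with hyu | rfl | hyu
  · refine absurd ⟨y, u, x, v, hyu, hux', hxv, p.symm hxy, huv, fun hyu' => ?_⟩ hnc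
    exact hux (p.trans (p.symm hyu') (p.symm hxy))
  · exact absurd (p.symm hxy) hux
  rcases lt_trichotomy y v with hyv | rfl | hyv
  · exact ⟨hyu, hyv⟩
  · exact absurd (p.trans huv (p.symm hxy)) hux
  · exact absurd ⟨u, x, v, y, hux', hxv, hyv, huv, hxy, hux⟩ hnc

namespace IsPairPartition

variable {N : ℕ} {p : Setoid (Fin N)}

theorem existsUnique_partner (hp : IsPairPartition p) (a : Fin N) :
    ∃! b, b ≠ a ∧ p a b := by
  have hcard : ({x | p x a} \ {a}).ncard = 1 := by
    rw [Set.ncard_sdiff_singleton_of_mem (s := {x | p x a}) (p.refl a), hp _ (p.mem_classes a)]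
  obtain ⟨b, hb⟩ := Set.ncard_eq_one.mp hcard
  have hmem : ∀ c, c ≠ a ∧ p a c ↔ c = b := fun c => by
    rw [← Set.mem_singleton_iff, ← hb]
    exact ⟨fun h => ⟨p.symm h.2, h.1⟩, fun h => ⟨h.2, p.symm h.1⟩⟩
  exact ⟨b, (hmem b).mpr rfl, fun c hc => (hmem c).mp hc⟩

noncomputable def partner (hp : IsPairPartition p) (a : Fin N) : Fin N :=
  (hp.existsUnique_partner a).exists.choose

theorem partner_ne (hp : IsPairPartition p) (a : Fin N) : hp.partner a ≠ a :=
  (hp.existsUnique_partner a).exists.choose_spec.1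

theorem rel_partner (hp : IsPairPartition p) (a : Fin N) : p a (hp.partner a) :=
  (hp.existsUnique_partner a).exists.choose_spec.2

theorem rel_iff (hp : IsPairPartition p) {a b : Fin N} : p a b ↔ b = a ∨ b = hp.partner a := by
  refine ⟨fun hab => or_iff_not_imp_left.mpr fun hba => ?_, ?_⟩
  · exact (hp.existsUnique_partner a).unique ⟨hba, hab⟩ ⟨hp.partner_ne a, hp.rel_partner a⟩
  · rintro (rfl | rfl)
    exacts [p.refl b, hp.rel_partner a]

theorem partner_partner (hp : IsPairPartition p) (a : Fin N) : hp.partner (hp.partner a) = a :=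
  ((hp.rel_iff.mp (p.symm (hp.rel_partner a))).resolve_left (hp.partner_ne a).symm).symm

theorem rel_mem_Ioo (hp : IsPairPartition p) (hnc : IsNoncrossing p) {u x y : Fin N}
    (hx : x ∈ Set.Ioo u (hp.partner u)) (hxy : p x y) : y ∈ Set.Ioo u (hp.partner u) := by
  refine hnc.rel_mem_Ioo (hp.rel_partner u) hx (fun hux => ?_) hxy
  rcases hp.rel_iff.mp hux with rfl | rfl
  exacts [hx.1.false, hx.2.false]

theorem rel_mem_Icc (hp : IsPairPartition p) (hnc : IsNoncrossing p) {u x y : Fin N}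
    (hx : x ∈ Set.Icc u (hp.partner u)) (hxy : p x y) : y ∈ Set.Icc u (hp.partner u) := by
  have hu : u ≤ hp.partner u := hx.1.trans hx.2
  rcases eq_or_lt_of_le hx.1 with rfl | hux
  · rcases hp.rel_iff.mp hxy with rfl | rfl
    exacts [hx, ⟨hu, le_rfl⟩]
  rcases eq_or_lt_of_le hx.2 with rfl | hxv
  · rcases hp.rel_iff.mp hxy with rfl | rfl
    exacts [hx, by rw [hp.partner_partner]; exact ⟨le_rfl, hu⟩]
  exact Set.Ioo_subset_Icc_self (hp.rel_mem_Ioo hnc ⟨hux, hxv⟩ hxy)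

theorem even_card_Ioo_partner (hp : IsPairPartition p) (hnc : IsNoncrossing p) (u : Fin N) :
    Even (Finset.Ioo u (hp.partner u)).card := by
  refine Finset.even_card_of_involution (fun x hx => ?_) (fun x _ => hp.partner_partner x)
    (fun x _ => hp.partner_ne x)
  rw [Finset.mem_Ioo] at hx ⊢
  exact hp.rel_mem_Ioo hnc hx (hp.rel_partner x)

theorem partner_val_mod_two_ne (hp : IsPairPartition p) (hnc : IsNoncrossing p) (a : Fin N) :
    (hp.partner a).val % 2 ≠ a.val % 2 := by
  wlog ha : a < hp.partner a generalizing a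
  · have hlt : hp.partner a < hp.partner (hp.partner a) := by
      rw [hp.partner_partner]
      exact lt_of_le_of_ne (not_lt.mp ha) (hp.partner_ne a)
    have := this (hp.partner a) hlt
    rw [hp.partner_partner] at this
    exact this.symm
  obtain ⟨k, hk⟩ := hp.even_card_Ioo_partner hnc a
  rw [Fin.card_Ioo] at hk
  omega

end IsPairPartition

theorem mSetoid_rel_iff {r : ℕ} {x y : Fin (2 * r)} : mSetoid r x y ↔ x.val / 2 = y.val / 2 :=
  Setoid.ker_def

theorem nSetoid_rel_iff {r : ℕ} {x y : Fin (2 * r)} :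
    nSetoid r x y ↔ ((x.val + 1) / 2) % r = ((y.val + 1) / 2) % r :=
  Setoid.ker_def

theorem succ_div_two_mod_eq {r : ℕ} (x : Fin (2 * r)) :
    ((x.val + 1) / 2) % r = if x.val + 1 = 2 * r then 0 else (x.val + 1) / 2 := by
  split_ifs with hx
  · rw [hx, Nat.mul_div_cancel_left r two_pos, Nat.mod_self]
  · exact Nat.mod_eq_of_lt (by omega)

namespace IsPairPartition

variable {r : ℕ} {p : Setoid (Fin (2 * r))}

theorem partner_val_of_odd (hp : IsPairPartition p) (hnc : IsNoncrossing p)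
    (hjoin : ∀ x y, (p ⊔ mSetoid r) x y) {a : Fin (2 * r)} (ha : a.val % 2 = 1) :
    (hp.partner a).val = a.val + 1 ∨ (hp.partner a).val = 0 ∧ a.val + 1 = 2 * r := by
  have hpar := hp.partner_val_mod_two_ne hnc a
  rcases lt_or_gt_of_ne (hp.partner_ne a) with hlt | hgt
  · right
    have hclosed : ∀ x y, mSetoid r x y →
        x ∈ Set.Icc (hp.partner a) a → y ∈ Set.Icc (hp.partner a) a := by
      intro x y hxy hx
      rw [mSetoid_rel_iff] at hxy
      simp only [Set.mem_Icc, Fin.le_def] at hx ⊢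
      omega
    have hpclosed : ∀ x y, p x y →
        x ∈ Set.Icc (hp.partner a) a → y ∈ Set.Icc (hp.partner a) a := by
      intro x y hxy hx
      have hIcc := hp.rel_mem_Icc hnc (u := hp.partner a) (x := x) (y := y)
      rw [hp.partner_partner] at hIcc
      exact hIcc hx hxy
    have hmem : ∀ y, y ∈ Set.Icc (hp.partner a) a := fun y =>
      Setoid.mem_of_sup_rel hpclosed hclosed (hjoin a y) ⟨hlt.le, le_rfl⟩
    have h0 : (hp.partner a).val ≤ 0 := (hmem ⟨0, by omega⟩).1
    have hlast : 2 * r - 1 ≤ a.val := (hmem ⟨2 * r - 1, by omega⟩).2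
    omega
  · left
    by_contra hne
    have hclosed : ∀ x y, mSetoid r x y →
        x ∈ Set.Ioo a (hp.partner a) → y ∈ Set.Ioo a (hp.partner a) := by
      intro x y hxy hx
      rw [mSetoid_rel_iff] at hxy
      simp only [Set.mem_Ioo, Fin.lt_def] at hx ⊢
      omega
    have hnext : (⟨a.val + 1, by omega⟩ : Fin (2 * r)) ∈ Set.Ioo a (hp.partner a) := by
      simp only [Set.mem_Ioo, Fin.lt_def] at hgt ⊢
      omega
    have ha_mem := Setoid.mem_of_sup_rel (fun _ _ hxy hx => hp.rel_mem_Ioo hnc hx hxy) hclosed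
      (hjoin _ a) hnext
    exact ha_mem.1.false

theorem partner_val_cases (hp : IsPairPartition p) (hnc : IsNoncrossing p)
    (hjoin : ∀ x y, (p ⊔ mSetoid r) x y) (a : Fin (2 * r)) :
    a.val % 2 = 1 ∧
        ((hp.partner a).val = a.val + 1 ∨ (hp.partner a).val = 0 ∧ a.val + 1 = 2 * r) ∨
      (hp.partner a).val % 2 = 1 ∧
        (a.val = (hp.partner a).val + 1 ∨ a.val = 0 ∧ (hp.partner a).val + 1 = 2 * r) := by
  rcases Nat.mod_two_eq_zero_or_one a.val with ha | ha
  · have hb : (hp.partner a).val % 2 = 1 := by have := hp.partner_val_mod_two_ne hnc a; omega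
    have := hp.partner_val_of_odd hnc hjoin hb
    rw [hp.partner_partner] at this
    exact Or.inr ⟨hb, this⟩
  · exact Or.inl ⟨ha, hp.partner_val_of_odd hnc hjoin ha⟩

end IsPairPartition

theorem unique_nc_pair_partition_join_m_one_block_general (r : ℕ)
    (p : Setoid (Fin (2 * r))) (hpair : IsPairPartition p) (hnc : IsNoncrossing p)
    (h : (p ⊔ mSetoid r).classes.ncard = 1) : p = nSetoid r := by
  have hjoin := Setoid.rel_of_ncard_classes_eq_one h
  ext x y
  have hx := hpair.partner_val_cases hnc hjoin x
  rw [hpair.rel_iff, nSetoid_rel_iff, succ_div_two_mod_eq x, succ_div_two_mod_eq y, Fin.ext_iff,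
    Fin.ext_iff]
  split_ifs <;> omega

/-- If `p` is a noncrossing pair partition of `{1,…,2r}` such that `p ∨ m` has a single
block, then `p = {{1,2r},{2,3},{4,5},…,{2r-2,2r-1}}` (which is exactly `nSetoid r`). -/
theorem unique_nc_pair_partition_join_m_one_block (r : ℕ) (hr : 1 ≤ r)
    (p : Setoid (Fin (2 * r))) (hpair : IsPairPartition p) (hnc : IsNoncrossing p)
    (h : (p ⊔ mSetoid r).classes.ncard = 1) : p = nSetoid r :=
  unique_nc_pair_partition_join_m_one_block_general r p hpair hnc h
end

section
/- Let p be a noncrossing pair partition of {1,...,2k} (k ≥ 2) with a block {ν, ν+1} where ν is even, and let p̃ be the partition of {1,...,2k} \ {ν, ν+1} obtained by removing this block. Then |p̃ ∨ m̃| = |p ∨ m| and |p̃ ∨ ñ| = |p ∨ n| − 1, where m, n are the canonical interval pair partitions of {1,...,2k} and m̃, ñ are their analogues on {1,...,2k} \ {ν, ν+1} (joining ν−1 with ν+2 appropriately). -/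
/-- The partition of `Fin N` whose only non-singleton block is `{a, b}`. -/
def pairSetoid {N : ℕ} (a b : Fin N) : Setoid (Fin N) :=
  Setoid.ker (fun i => if i = a then b else i)

/-!
Let `B = {a, b}` be the removed block and `c = a - 1`. The map collapsing `B` to `c` and fixing
its complement is a retraction onto `Bᶜ` along which `p`, `n` (both have `B` as a block) and
`m ∨ {a, b}` (in which all of `B` is joined to `c`) are invariant. For partitions invariant under
such a retraction, restricting to `Bᶜ` commutes with joins, so `p̃ ∨ m̃` and `p̃ ∨ ñ` are the
restrictions of `p ∨ m ∨ {a, b} = p ∨ m` and of `p ∨ n`. Restriction keeps every block of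
`p ∨ m`, since each one meets `Bᶜ` (the block of `a` and `b` contains `c`), and it loses exactly
the block `B` of `p ∨ n`.
-/

namespace Setoid

variable {α β : Type*}

theorem ncard_classes_comap_subtype (S : Set α) (q : Setoid α) :
    (q.comap (Subtype.val : S → α)).classes.ncard
      = {c | c ∈ q.classes ∧ (c ∩ S).Nonempty}.ncard := by
  have hclasses : (q.comap (Subtype.val : S → α)).classes
      = (fun c => (Subtype.val ⁻¹' c : Set S)) '' {c | c ∈ q.classes ∧ (c ∩ S).Nonempty} := by
    ext d
    constructor
    · rintro ⟨y, rfl⟩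
      exact ⟨{x | q x y.val}, ⟨q.mem_classes y.val, y.val, q.refl' _, y.prop⟩, rfl⟩
    · rintro ⟨c, ⟨⟨z, rfl⟩, w, hwz, hwS⟩, rfl⟩
      exact ⟨⟨w, hwS⟩, Set.ext fun x => ⟨fun hx => q.trans' hx (q.symm' hwz),
        fun hx => q.trans' hx hwz⟩⟩
  rw [hclasses]
  refine Set.InjOn.ncard_image ?_
  rintro c ⟨hc, w, hwc, hwS⟩ c' ⟨hc', -⟩ h
  have hwc' : (⟨w, hwS⟩ : S) ∈ (Subtype.val ⁻¹' c' : Set S) := by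
    rw [← show (Subtype.val ⁻¹' c : Set S) = Subtype.val ⁻¹' c' from h]
    exact hwc
  exact eq_of_mem_classes hc hwc hc' hwc'

theorem ncard_classes_comap_compl_of_rel {q : Setoid α} {B : Set α} {c : α} (hc : c ∉ B)
    (h : ∀ x ∈ B, q x c) :
    (q.comap (Subtype.val : (Bᶜ : Set α) → α)).classes.ncard = q.classes.ncard := by
  rw [ncard_classes_comap_subtype]
  congr 1
  ext d
  simp only [Set.mem_ofPred_eq, and_iff_left_iff_imp]
  rintro ⟨y, rfl⟩
  by_cases hy : y ∈ B
  · exact ⟨c, q.symm' (h y hy), hc⟩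
  · exact ⟨y, q.refl' y, hy⟩

theorem ncard_classes_comap_compl_of_mem_classes {q : Setoid α} {B : Set α}
    (hB : B ∈ q.classes) :
    (q.comap (Subtype.val : (Bᶜ : Set α) → α)).classes.ncard = q.classes.ncard - 1 := by
  rw [ncard_classes_comap_subtype, ← Set.ncard_sdiff_singleton_of_mem hB]
  congr 1
  ext d
  simp only [Set.mem_ofPred_eq, Set.mem_sdiff, Set.mem_singleton_iff]
  constructor
  · rintro ⟨hd, x, hxd, hxB⟩
    exact ⟨hd, fun hdB => hxB (hdB ▸ hxd)⟩
  · rintro ⟨hd, hdB⟩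
    refine ⟨hd, Set.not_subset.1 fun hsub => hdB ?_⟩
    obtain ⟨y, rfl⟩ := id hd
    exact eq_of_mem_classes hd (q.refl' y) hB (hsub (q.refl' y))

theorem comap_sup_of_leftInverse {f : β → α} {r : α → β} (hr : Function.LeftInverse r f)
    {s t : Setoid α} (hs : s ≤ s.comap (f ∘ r)) (ht : t ≤ t.comap (f ∘ r)) :
    (s ⊔ t).comap f = s.comap f ⊔ t.comap f := by
  refine le_antisymm ?_ (sup_le (fun x y h => (le_sup_left : s ≤ s ⊔ t) h)
    (fun x y h => (le_sup_right : t ≤ s ⊔ t) h))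
  have hst : s ⊔ t ≤ (s.comap f ⊔ t.comap f).comap r :=
    sup_le (hs.trans fun x y h => (le_sup_left : s.comap f ≤ _) h)
      (ht.trans fun x y h => (le_sup_right : t.comap f ≤ _) h)
  intro x y h
  have hxy := hst h
  rwa [comap_rel, hr x, hr y] at hxy

theorem le_ker_mem_of_rel_iff {s : Setoid α} {B : Set α} {x : α} (h : ∀ y, s y x ↔ y ∈ B) :
    s ≤ ker (· ∈ B) := by
  intro y z hyz
  rw [ker_def, eq_iff_iff, ← h, ← h]
  exact ⟨fun hy => s.trans' (s.symm' hyz) hy, fun hz => s.trans' hyz hz⟩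

theorem sup_rel_iff_of_rel_iff {s t : Setoid α} {B : Set α} {x : α} (hx : x ∈ B)
    (hs : ∀ y, s y x ↔ y ∈ B) (ht : ∀ y, t y x ↔ y ∈ B) (y : α) : (s ⊔ t) y x ↔ y ∈ B := by
  refine ⟨fun hy => ?_, fun hy => (le_sup_left : s ≤ s ⊔ t) ((hs y).2 hy)⟩
  have hyx := sup_le (le_ker_mem_of_rel_iff hs) (le_ker_mem_of_rel_iff ht) hy
  exact (ker_def.1 hyx).to_iff.2 hx

theorem mem_classes_of_rel_iff {s : Setoid α} {B : Set α} {x : α} (h : ∀ y, s y x ↔ y ∈ B) :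
    B ∈ s.classes :=
  ⟨x, Set.ext fun y => (h y).symm⟩

end Setoid

section Collapse

variable {α : Type*} {B : Set α} {c : α}

open Classical in
noncomputable def collapseTo (B : Set α) (hc : c ∉ B) (x : α) : (Bᶜ : Set α) :=
  if hx : x ∈ B then ⟨c, hc⟩ else ⟨x, hx⟩

theorem collapseTo_of_mem (hc : c ∉ B) {x : α} (hx : x ∈ B) : (collapseTo B hc x : α) = c := by
  simp [collapseTo, hx]

theorem collapseTo_of_notMem (hc : c ∉ B) {x : α} (hx : x ∉ B) :
    (collapseTo B hc x : α) = x := by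
  simp [collapseTo, hx]

theorem leftInverse_collapseTo (hc : c ∉ B) :
    Function.LeftInverse (collapseTo B hc) Subtype.val :=
  fun x => Subtype.ext (collapseTo_of_notMem hc x.prop)

theorem le_comap_collapseTo_of_le_ker {s : Setoid α} (hc : c ∉ B) (hs : s ≤ Setoid.ker (· ∈ B)) :
    s ≤ s.comap (Subtype.val ∘ collapseTo B hc) := by
  intro x y hxy
  have hB : x ∈ B ↔ y ∈ B := (Setoid.ker_def.1 (hs hxy)).to_iff
  rw [Setoid.comap_rel, Function.comp_apply, Function.comp_apply]
  by_cases hx : x ∈ B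
  · rw [collapseTo_of_mem hc hx, collapseTo_of_mem hc (hB.1 hx)]
  · rw [collapseTo_of_notMem hc hx, collapseTo_of_notMem hc (mt hB.2 hx)]
    exact hxy

theorem le_comap_collapseTo_of_rel {s : Setoid α} (hc : c ∉ B) (hs : ∀ x ∈ B, s x c) :
    s ≤ s.comap (Subtype.val ∘ collapseTo B hc) := by
  have hcollapse : ∀ x, s (collapseTo B hc x) x := fun x => by
    by_cases hx : x ∈ B
    · rw [collapseTo_of_mem hc hx]
      exact s.symm' (hs x hx)
    · rw [collapseTo_of_notMem hc hx]
  exact fun x y hxy => s.trans' (hcollapse x) (s.trans' hxy (s.symm' (hcollapse y)))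

end Collapse

section PairPartitions

variable {N : ℕ} {a b : Fin N}

theorem pairSetoid_rel (hab : a ≠ b) : pairSetoid a b a b :=
  Setoid.ker_def.2 (by simp [hab.symm])

theorem pairSetoid_le {s : Setoid (Fin N)} (h : s a b) : pairSetoid a b ≤ s := by
  have hrel : ∀ x, s x (if x = a then b else x) := fun x => by
    split_ifs with hx
    · exact hx ▸ h
    · exact s.refl' x
  intro x y hxy
  have hxy' : (if x = a then b else x) = (if y = a then b else y) := hxy
  exact s.trans' (hrel x) (hxy' ▸ s.symm' (hrel y))

theorem IsPairPartition.rel_iff_mem_pair {p : Setoid (Fin N)} (hpair : IsPairPartition p)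
    (hab : a ≠ b) (h : p a b) (y : Fin N) : p y a ↔ y ∈ ({a, b} : Set (Fin N)) := by
  have hsub : ({a, b} : Set (Fin N)) ⊆ {x | p x a} := by
    rintro x (rfl | rfl)
    exacts [p.refl' x, p.symm' h]
  have hclass : ({a, b} : Set (Fin N)) = {x | p x a} :=
    Set.eq_of_subset_of_ncard_le hsub
      (by rw [hpair _ (p.mem_classes a), Set.ncard_pair hab])
  rw [hclass]
  rfl

end PairPartitions

section CanonicalPartitions

variable {k : ℕ} {a b : Fin (2 * k)}

theorem exists_mSetoid_rel_notMem_pair (ha : Odd a.val) (hb : b.val = a.val + 1) :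
    ∃ c ∉ ({a, b} : Set (Fin (2 * k))), mSetoid k c a := by
  obtain ⟨j, hj⟩ := ha
  refine ⟨⟨a.val - 1, by omega⟩, ?_, ?_⟩
  · simp only [Set.mem_insert_iff, Set.mem_singleton_iff, Fin.ext_iff, hb]
    omega
  · show (a.val - 1) / 2 = a.val / 2
    omega

theorem nSetoid_rel_iff_s6 (ha : Odd a.val) (hb : b.val = a.val + 1) (x : Fin (2 * k)) :
    nSetoid k x a ↔ x ∈ ({a, b} : Set (Fin (2 * k))) := by
  obtain ⟨j, hj⟩ := ha
  have hbk := b.isLt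
  have hxk := x.isLt
  have hak : (a.val + 1) / 2 % k = j + 1 := by
    rw [Nat.mod_eq_of_lt (by omega)]
    omega
  show (x.val + 1) / 2 % k = (a.val + 1) / 2 % k ↔ _
  simp only [Set.mem_insert_iff, Set.mem_singleton_iff, Fin.ext_iff, hb, hak]
  rcases Nat.lt_or_ge ((x.val + 1) / 2) k with hx | hx
  · rw [Nat.mod_eq_of_lt hx]
    omega
  · rw [show (x.val + 1) / 2 = k by omega, Nat.mod_self]
    omega

end CanonicalPartitions

-- Indices are 0-based, so the paper's even `ν` is the odd `a` here.
theorem remove_nearest_neighbour_pair_general (k : ℕ) (p : Setoid (Fin (2 * k)))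
    (hpair : IsPairPartition p)
    (a b : Fin (2 * k)) (ha : Odd a.val) (hb : b.val = a.val + 1) (hblock : p.r a b) :
    ((Setoid.comap (Subtype.val : ({a, b}ᶜ : Set (Fin (2 * k))) → Fin (2 * k)) p ⊔
        Setoid.comap Subtype.val (mSetoid k ⊔ pairSetoid a b)).classes.ncard
      = (p ⊔ mSetoid k).classes.ncard)
    ∧ ((Setoid.comap (Subtype.val : ({a, b}ᶜ : Set (Fin (2 * k))) → Fin (2 * k)) p ⊔
        Setoid.comap Subtype.val (nSetoid k)).classes.ncard
      = (p ⊔ nSetoid k).classes.ncard - 1) := by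
  have hab : a ≠ b := Fin.ne_of_val_ne (by omega)
  obtain ⟨c, hc, hca⟩ := exists_mSetoid_rel_notMem_pair ha hb
  have hp := hpair.rel_iff_mem_pair hab hblock
  have hpc := le_comap_collapseTo_of_le_ker hc (Setoid.le_ker_mem_of_rel_iff hp)
  constructor
  · have hmc : ∀ x ∈ ({a, b} : Set (Fin (2 * k))), (mSetoid k ⊔ pairSetoid a b) x c := by
      have hac : (mSetoid k ⊔ pairSetoid a b) a c := (le_sup_left : mSetoid k ≤ _) hca.symm
      have hbc : (mSetoid k ⊔ pairSetoid a b) b c :=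
        Setoid.trans' _ ((le_sup_right : pairSetoid a b ≤ _) (pairSetoid_rel hab).symm) hac
      rintro x (rfl | rfl)
      exacts [hac, hbc]
    rw [← Setoid.comap_sup_of_leftInverse (leftInverse_collapseTo hc) hpc
        (le_comap_collapseTo_of_rel hc hmc),
      Setoid.ncard_classes_comap_compl_of_rel hc fun x hx => (le_sup_right : _ ≤ p ⊔ _) (hmc x hx),
      sup_left_comm, sup_eq_left.2 (pairSetoid_le hblock), sup_comm]
  · have hn := nSetoid_rel_iff_s6 ha hb
    have hpn := Setoid.sup_rel_iff_of_rel_iff (Set.mem_insert a _) hp hn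
    rw [← Setoid.comap_sup_of_leftInverse (leftInverse_collapseTo hc) hpc
        (le_comap_collapseTo_of_le_ker hc (Setoid.le_ker_mem_of_rel_iff hn)),
      Setoid.ncard_classes_comap_compl_of_mem_classes (Setoid.mem_classes_of_rel_iff hpn)]

/-- Removing a nearest-neighbour block `{ν, ν+1}` (ν even, 1-based; here 0-based the
block is `{a, a+1}` with `a` odd) from a noncrossing pair partition `p` leaves
`|p̃ ∨ m̃| = |p ∨ m|` and `|p̃ ∨ ñ| = |p ∨ n| - 1`, where `m̃` is `m` with the blocks
containing `ν, ν+1` replaced by `{ν-1, ν+2}`, and `ñ` consists of the blocks of `n`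
not containing `ν, ν+1`; partitions of the complement are realized by `Setoid.comap`. -/
theorem remove_nearest_neighbour_pair (k : ℕ) (hk : 2 ≤ k) (p : Setoid (Fin (2 * k)))
    (hpair : IsPairPartition p) (hnc : IsNoncrossing p)
    (a b : Fin (2 * k)) (ha : Odd a.val) (hb : b.val = a.val + 1) (hblock : p.r a b) :
    ((Setoid.comap (Subtype.val : ({a, b}ᶜ : Set (Fin (2 * k))) → Fin (2 * k)) p ⊔
        Setoid.comap Subtype.val (mSetoid k ⊔ pairSetoid a b)).classes.ncard
      = (p ⊔ mSetoid k).classes.ncard)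
    ∧ ((Setoid.comap (Subtype.val : ({a, b}ᶜ : Set (Fin (2 * k))) → Fin (2 * k)) p ⊔
        Setoid.comap Subtype.val (nSetoid k)).classes.ncard
      = (p ⊔ nSetoid k).classes.ncard - 1) :=
  remove_nearest_neighbour_pair_general k p hpair a b ha hb hblock
end
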